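/- Let f, g : I → ℝ be 4 times differentiable functions such that D_{f,g}(x,y) = 0 for all x, y ∈ I. Then W^{0,2}_{f,g}(x) = 0 and W^{1,3}_{f,g}(x) = 0 for all x ∈ I, and consequently there exist real constants α, β such that W^{0,1}_{f,g}(x) = α and W^{1,2}_{f,g}(x) = β for all x ∈ I. -/

import Mathlib

/-- The two-variable determinant expression
`D_{f,g}(x,y) = f((x+y)/2)·(g(x)+g(y)) − g((x+y)/2)·(f(x)+f(y))`. -/
noncomputable def Dfg (f g : ℝ → ℝ) (x y : ℝ) : ℝ :=
  f ((x + y) / 2) * (g x + g y) - g ((x + y) / 2) * (f x + f y)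

/-- The generalized Wronskian
`W^{k,ℓ}_{f,g}(x) = f^{(k)}(x) g^{(ℓ)}(x) − g^{(k)}(x) f^{(ℓ)}(x)`. -/
noncomputable def Wfg (f g : ℝ → ℝ) (k l : ℕ) (x : ℝ) : ℝ :=
  iteratedDeriv k f x * iteratedDeriv l g x - iteratedDeriv k g x * iteratedDeriv l f x

/-!
Writing `x = m - t`, `y = m + t`, the hypothesis says that
`E₀(t) = f(m)·(g(m+t) + g(m-t)) - g(m)·(f(m+t) + f(m-t))` vanishes near `t = 0`, hence so do
all its derivatives in `t`. The `k`-th one at `t = 0` is `(1 + (-1)^k)·W^{0,k}_{f,g}(m)`, so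
`W^{0,2} = W^{0,4} = 0`. Differentiating `W^{0,2} = 0` twice with
`(W^{k,ℓ})' = W^{k+1,ℓ} + W^{k,ℓ+1}` gives `2·W^{1,3} + W^{0,4} = 0`, so `W^{1,3} = 0`;
the same rule makes `W^{0,1}` and `W^{1,2}` have derivatives `W^{0,2}` and `W^{1,3}`.
-/

open Set Filter

lemma eqOn_zero_of_hasDerivAt {E E' : ℝ → ℝ} {U : Set ℝ} (hU : IsOpen U) (hE : EqOn E 0 U)
    (hd : ∀ t ∈ U, HasDerivAt E (E' t) t) : EqOn E' 0 U := fun t ht =>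
  (hd t ht).unique <|
    (hasDerivAt_const t (0 : ℝ)).congr_of_eventuallyEq (eventuallyEq_of_mem (hU.mem_nhds ht) hE)

lemma eqOn_zero_of_hasDerivAt_succ {E : ℕ → ℝ → ℝ} {U : Set ℝ} {n : ℕ} (hU : IsOpen U)
    (h0 : EqOn (E 0) 0 U) (hd : ∀ k < n, ∀ t ∈ U, HasDerivAt (E k) (E (k + 1) t) t) :
    ∀ k ≤ n, EqOn (E k) 0 U := by
  intro k hk
  induction k with
  | zero => exact h0
  | succ k ih => exact eqOn_zero_of_hasDerivAt hU (ih (by omega)) (hd k (by omega))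

section Wronskian

variable {f g : ℝ → ℝ}

lemma Wfg_self (k : ℕ) (x : ℝ) : Wfg f g k k x = 0 := by
  unfold Wfg; ring

lemma hasDerivAt_Wfg {k l : ℕ} {x : ℝ}
    (hfk : DifferentiableAt ℝ (iteratedDeriv k f) x)
    (hfl : DifferentiableAt ℝ (iteratedDeriv l f) x)
    (hgk : DifferentiableAt ℝ (iteratedDeriv k g) x)
    (hgl : DifferentiableAt ℝ (iteratedDeriv l g) x) :
    HasDerivAt (Wfg f g k l) (Wfg f g (k + 1) l x + Wfg f g k (l + 1) x) x := by
  have h := (hfk.hasDerivAt.mul hgl.hasDerivAt).sub (hgk.hasDerivAt.mul hfl.hasDerivAt)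
  simp only [← iteratedDeriv_succ] at h
  exact h.congr_deriv (by simp only [Wfg]; ring)

end Wronskian

/-- `symmSum h k m` is the `k`-th derivative of `t ↦ h (m + t) + h (m - t)`. -/
noncomputable def symmSum (h : ℝ → ℝ) (k : ℕ) (m t : ℝ) : ℝ :=
  iteratedDeriv k h (m + t) + (-1) ^ k * iteratedDeriv k h (m - t)

lemma hasDerivAt_symmSum {h : ℝ → ℝ} {k : ℕ} {m t : ℝ}
    (hp : DifferentiableAt ℝ (iteratedDeriv k h) (m + t))
    (hm : DifferentiableAt ℝ (iteratedDeriv k h) (m - t)) :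
    HasDerivAt (symmSum h k m) (symmSum h (k + 1) m t) t := by
  have hd := (hp.hasDerivAt.comp_const_add m t).add
    ((hm.hasDerivAt.comp_const_sub m t).const_mul ((-1) ^ k))
  simp only [← iteratedDeriv_succ] at hd
  exact hd.congr_deriv (by simp only [symmSum, pow_succ]; ring)

lemma symmSum_zero_of_even (h : ℝ → ℝ) {k : ℕ} (hk : Even k) (m : ℝ) :
    symmSum h k m 0 = 2 * iteratedDeriv k h m := by
  simp only [symmSum, hk.neg_one_pow, add_zero, sub_zero]
  ring

section OnInterval

variable {I : Set ℝ} {f g : ℝ → ℝ} {n : ℕ}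

lemma hasDerivAt_Wfg_of_lt
    (hf : ∀ k < n, ∀ x ∈ I, DifferentiableAt ℝ (iteratedDeriv k f) x)
    (hg : ∀ k < n, ∀ x ∈ I, DifferentiableAt ℝ (iteratedDeriv k g) x) {k l : ℕ} (hk : k < n)
    (hl : l < n) {x : ℝ} (hx : x ∈ I) :
    HasDerivAt (Wfg f g k l) (Wfg f g (k + 1) l x + Wfg f g k (l + 1) x) x :=
  hasDerivAt_Wfg (hf k hk x hx) (hf l hl x hx) (hg k hk x hx) (hg l hl x hx)

lemma exists_Wfg_eq_const (hI : IsOpen I) (hIc : IsPreconnected I)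
    (hf : ∀ k < n, ∀ x ∈ I, DifferentiableAt ℝ (iteratedDeriv k f) x)
    (hg : ∀ k < n, ∀ x ∈ I, DifferentiableAt ℝ (iteratedDeriv k g) x) {k l : ℕ} (hk : k < n)
    (hl : l < n) (hW : ∀ x ∈ I, Wfg f g (k + 1) l x + Wfg f g k (l + 1) x = 0) :
    ∃ c, ∀ x ∈ I, Wfg f g k l x = c :=
  hI.exists_is_const_of_deriv_eq_zero hIc
    (fun _ hx => (hasDerivAt_Wfg_of_lt hf hg hk hl hx).differentiableAt.differentiableWithinAt)
    (fun x hx => (hasDerivAt_Wfg_of_lt hf hg hk hl hx).deriv.trans (hW x hx))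

lemma Wfg_zero_eq_zero_of_Dfg_eq_zero (hI : IsOpen I)
    (hf : ∀ k < n, ∀ x ∈ I, DifferentiableAt ℝ (iteratedDeriv k f) x)
    (hg : ∀ k < n, ∀ x ∈ I, DifferentiableAt ℝ (iteratedDeriv k g) x)
    (hD : ∀ x ∈ I, ∀ y ∈ I, Dfg f g x y = 0) {k : ℕ} (hkn : k ≤ n) (hk : Even k) :
    ∀ m ∈ I, Wfg f g 0 k m = 0 := by
  intro m hm
  set U : Set ℝ := {t | m + t ∈ I ∧ m - t ∈ I}
  have hU : IsOpen U :=
    (hI.preimage (continuous_const.add continuous_id)).inter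
      (hI.preimage (continuous_const.sub continuous_id))
  have h0U : (0 : ℝ) ∈ U := by simp [U, hm]
  set E : ℕ → ℝ → ℝ := fun j t => f m * symmSum g j m t - g m * symmSum f j m t
  have hE0 : EqOn (E 0) 0 U := by
    intro t ⟨hplus, hminus⟩
    have hmid : (m + t + (m - t)) / 2 = m := by ring
    have hDt := hD _ hplus _ hminus
    simp only [Dfg, hmid] at hDt
    simpa [E, symmSum] using hDt
  have hEsucc : ∀ j < n, ∀ t ∈ U, HasDerivAt (E j) (E (j + 1) t) t := fun j hj t ⟨hplus, hminus⟩ =>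
    ((hasDerivAt_symmSum (hg j hj _ hplus) (hg j hj _ hminus)).const_mul (f m)).sub
      ((hasDerivAt_symmSum (hf j hj _ hplus) (hf j hj _ hminus)).const_mul (g m))
  have hEk := eqOn_zero_of_hasDerivAt_succ hU hE0 hEsucc k hkn h0U
  simp only [E, symmSum_zero_of_even _ hk, Pi.zero_apply] at hEk
  simp only [Wfg, iteratedDeriv_zero]
  linarith

lemma Wfg_one_three_eq_zero (hI : IsOpen I)
    (hf : ∀ k < 4, ∀ x ∈ I, DifferentiableAt ℝ (iteratedDeriv k f) x)
    (hg : ∀ k < 4, ∀ x ∈ I, DifferentiableAt ℝ (iteratedDeriv k g) x)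
    (h02 : ∀ x ∈ I, Wfg f g 0 2 x = 0) (h04 : ∀ x ∈ I, Wfg f g 0 4 x = 0) :
    ∀ x ∈ I, Wfg f g 1 3 x = 0 := by
  have h12_03 : EqOn (fun x => Wfg f g 1 2 x + Wfg f g 0 3 x) 0 I :=
    eqOn_zero_of_hasDerivAt hI h02
      (fun x hx => hasDerivAt_Wfg_of_lt hf hg (by norm_num) (by norm_num) hx)
  intro x hx
  have h := eqOn_zero_of_hasDerivAt hI h12_03 (fun x hx =>
    (hasDerivAt_Wfg_of_lt hf hg (by norm_num) (by norm_num) hx).add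
      (hasDerivAt_Wfg_of_lt hf hg (by norm_num) (by norm_num) hx)) hx
  simp only [Wfg_self, h04 x hx, Pi.zero_apply] at h
  linarith

end OnInterval

theorem stmt12_general (I : Set ℝ) (hIopen : IsOpen I) (hIconn : I.OrdConnected)
    (f g : ℝ → ℝ)
    (hf : ∀ k < 4, ∀ x ∈ I, DifferentiableAt ℝ (iteratedDeriv k f) x)
    (hg : ∀ k < 4, ∀ x ∈ I, DifferentiableAt ℝ (iteratedDeriv k g) x)
    (hD : ∀ x ∈ I, ∀ y ∈ I, Dfg f g x y = 0) :
    (∀ x ∈ I, Wfg f g 0 2 x = 0 ∧ Wfg f g 1 3 x = 0) ∧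
      ∃ α β : ℝ, ∀ x ∈ I, Wfg f g 0 1 x = α ∧ Wfg f g 1 2 x = β := by
  have hW02 := Wfg_zero_eq_zero_of_Dfg_eq_zero hIopen hf hg hD (by norm_num) even_two
  have hW04 := Wfg_zero_eq_zero_of_Dfg_eq_zero hIopen hf hg hD le_rfl ⟨2, rfl⟩
  have hW13 := Wfg_one_three_eq_zero hIopen hf hg hW02 hW04
  obtain ⟨α, hα⟩ := exists_Wfg_eq_const hIopen hIconn.isPreconnected hf hg (k := 0) (l := 1)
    (by norm_num) (by norm_num) fun x hx => by simp [Wfg_self, hW02 x hx]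
  obtain ⟨β, hβ⟩ := exists_Wfg_eq_const hIopen hIconn.isPreconnected hf hg (k := 1) (l := 2)
    (by norm_num) (by norm_num) fun x hx => by simp [Wfg_self, hW13 x hx]
  exact ⟨fun x hx => ⟨hW02 x hx, hW13 x hx⟩, α, β, fun x hx => ⟨hα x hx, hβ x hx⟩⟩

/-- Let `f, g : I → ℝ` be `4` times differentiable functions such that
`D_{f,g}(x,y) = 0` for all `x, y ∈ I`.  Then `W^{0,2}_{f,g} = 0` and `W^{1,3}_{f,g} = 0`
on `I`, and consequently there exist real constants `α, β` such that
`W^{0,1}_{f,g} = α` and `W^{1,2}_{f,g} = β` on `I`. -/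
theorem stmt12 (I : Set ℝ) (hIopen : IsOpen I) (hIconn : I.OrdConnected)
    (hIne : I.Nonempty) (f g : ℝ → ℝ)
    (hf : ∀ k < 4, ∀ x ∈ I, DifferentiableAt ℝ (iteratedDeriv k f) x)
    (hg : ∀ k < 4, ∀ x ∈ I, DifferentiableAt ℝ (iteratedDeriv k g) x)
    (hD : ∀ x ∈ I, ∀ y ∈ I, Dfg f g x y = 0) :
    (∀ x ∈ I, Wfg f g 0 2 x = 0 ∧ Wfg f g 1 3 x = 0) ∧
      ∃ α β : ℝ, ∀ x ∈ I, Wfg f g 0 1 x = α ∧ Wfg f g 1 2 x = β :=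
  stmt12_general I hIopen hIconn f g hf hg hD
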